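/- arXiv:1403.2255 — 4 statements merged into one kernel-verified Lean document; each statement's English description precedes it below -/
import Mathlib

section
/- Let (a_n) be a non-negative real sequence with convergent sum S = Σ_{n=1}^∞ a_n < ∞. Define b_n = Σ_{l=1}^n 2^{l-n} a_l. Then liminf_{n→∞} n·b_n = 0. -/
/-!
Up to the missing `l = 0` term, `b` is dominated by the Cauchy product of `a` with `(1/2)^k`,
so `b` is summable. A summable sequence cannot satisfy `n * b n ≥ ε` eventually, since then it
would dominate the harmonic series `ε / n`; hence `n * b n` is frequently below every `ε > 0`,
and being nonnegative its liminf is `0`.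
-/

open Filter Finset

theorem Filter.liminf_eq_zero_of_nonneg_of_frequently_lt {ι : Type*} {l : Filter ι} {f : ι → ℝ}
    (hf : ∀ i, 0 ≤ f i) (hfreq : ∀ ε > 0, ∃ᶠ i in l, f i < ε) : liminf f l = 0 := by
  have hbdd : IsBoundedUnder (· ≥ ·) l f := isBoundedUnder_of ⟨0, hf⟩
  have hcobdd : IsCoboundedUnder (· ≥ ·) l f :=
    IsCoboundedUnder.of_frequently_le ((hfreq 1 one_pos).mono fun _ h => h.le)
  refine le_antisymm (le_of_forall_pos_le_add fun ε hε => ?_)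
    (le_liminf_of_le hcobdd (Eventually.of_forall hf))
  rw [zero_add]
  exact liminf_le_of_frequently_le ((hfreq ε hε).mono fun _ h => h.le) hbdd

theorem Summable.frequently_natCast_mul_lt {f : ℕ → ℝ} (hf : Summable f) {ε : ℝ} (hε : 0 < ε) :
    ∃ᶠ n : ℕ in atTop, (n : ℝ) * f n < ε := by
  intro hge
  refine Real.not_summable_one_div_natCast (.of_norm_bounded_eventually_nat (hf.div_const ε) ?_)
  filter_upwards [hge, eventually_gt_atTop 0] with n hn hpos
  have hn : ε ≤ n * f n := not_lt.1 hn
  have hpos : (0 : ℝ) < n := Nat.cast_pos.2 hpos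
  rw [Real.norm_of_nonneg (by positivity), div_le_div_iff₀ hpos hε]
  linarith

theorem Summable.liminf_natCast_mul_eq_zero {f : ℕ → ℝ} (hf : Summable f) (hf0 : ∀ n, 0 ≤ f n) :
    liminf (fun n : ℕ => (n : ℝ) * f n) atTop = 0 :=
  liminf_eq_zero_of_nonneg_of_frequently_lt (fun n => mul_nonneg n.cast_nonneg (hf0 n))
    fun _ hε => hf.frequently_natCast_mul_lt hε

theorem two_zpow_sub_eq_half_pow {l n : ℕ} (h : l ≤ n) :
    (2 : ℝ) ^ ((l : ℤ) - n) = (1 / 2) ^ (n - l) := by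
  rw [show (l : ℤ) - n = -((n - l : ℕ) : ℤ) by omega, zpow_neg, zpow_natCast, one_div, inv_pow]

theorem summable_sum_Icc_two_zpow_sub_mul {a : ℕ → ℝ} (ha : ∀ n, 0 ≤ a n) (hsum : Summable a) :
    Summable fun n : ℕ => ∑ l ∈ Icc 1 n, (2 : ℝ) ^ ((l : ℤ) - n) * a l := by
  have hcauchy : Summable fun n => ∑ kl ∈ antidiagonal n, a kl.1 * (1 / 2 : ℝ) ^ kl.2 :=
    summable_sum_mul_antidiagonal_of_summable_mul
      (hsum.mul_of_nonneg summable_geometric_two ha fun _ => by positivity)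
  refine hcauchy.of_nonneg_of_le (fun n => sum_nonneg fun l _ => mul_nonneg (by positivity) (ha l))
    fun n => ?_
  rw [Nat.sum_antidiagonal_eq_sum_range_succ (fun k l => a k * (1 / 2 : ℝ) ^ l)]
  calc ∑ l ∈ Icc 1 n, (2 : ℝ) ^ ((l : ℤ) - n) * a l
      = ∑ l ∈ Icc 1 n, a l * (1 / 2) ^ (n - l) :=
        sum_congr rfl fun l hl => by
          rw [two_zpow_sub_eq_half_pow (mem_Icc.1 hl).2, mul_comm]
    _ ≤ ∑ l ∈ range n.succ, a l * (1 / 2) ^ (n - l) :=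
        sum_le_sum_of_subset_of_nonneg
          (fun l hl => mem_range.2 (Nat.lt_succ_of_le (mem_Icc.1 hl).2))
          fun l _ _ => mul_nonneg (ha l) (by positivity)

/-- If `(a_n)` is a non-negative sequence with convergent sum, and
`b n = ∑_{l=1}^n 2^(l-n) a_l`, then `liminf n * b n = 0`. -/
theorem stmt0 (a : ℕ → ℝ) (ha : ∀ n, 0 ≤ a n) (hsum : Summable a) :
    Filter.liminf
      (fun n : ℕ => (n : ℝ) * ∑ l ∈ Finset.Icc 1 n, (2 : ℝ) ^ ((l : ℤ) - (n : ℤ)) * a l)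
      Filter.atTop = 0 :=
  (summable_sum_Icc_two_zpow_sub_mul ha hsum).liminf_natCast_mul_eq_zero
    fun n => sum_nonneg fun l _ => mul_nonneg (by positivity) (ha l)
end

section
/- Let ξ = a + ib ∈ ℂ^d with ξ·ξ = 0 and |ξ| > 2, and K̂_ξ(k) = 1/(−|k|² + i ξ·k). Then there is an absolute constant C such that for every k ∈ ℝ^d with |k| ≤ 2|ξ|, |K̂_ξ(k)| ≤ C/(|ξ| · dist(k, Γ_ξ)), where Γ_ξ = {k : −|k|² + i ξ·k = 0}. -/
/-!
Since `ξ = a + i b` is null, `‖a‖ = ‖b‖` and `a ⟂ b`, so the symbol equals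
`-(‖k + b/2‖² - ‖a‖²/4) + i ⟪a, k + b/2⟫` and `Γ_ξ` is the sphere of radius `‖a‖/2` about `-b/2`
inside the hyperplane `a^⊥`. From `k` one reaches `Γ_ξ` by projecting orthogonally onto the
hyperplane (a step of length `|⟪a, k⟫| / ‖a‖`) and then moving radially onto the sphere (a step of
length `|‖x‖ - R| ≤ |‖x‖² - R²| / R`). For `‖k‖ ≲ ‖a‖` both steps are `O(|symbol| / ‖a‖)`, while
`|ξ| = √2 ‖a‖`.
-/

open scoped RealInnerProductSpace
open Complex Metric

theorem abs_sub_mul_le_abs_sq_sub_sq {s R : ℝ} (hs : 0 ≤ s) (hR : 0 ≤ R) :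
    |s - R| * R ≤ |s ^ 2 - R ^ 2| := by
  rw [sq_sub_sq, abs_mul, abs_of_nonneg (by positivity : 0 ≤ s + R), mul_comm]
  gcongr
  linarith

theorem norm_one_div_le_div_infDist {X 𝕜 : Type*} [MetricSpace X] [NormedField 𝕜] {f : X → 𝕜}
    (hf : Continuous f) (hzero : ∃ y, f y = 0) {x : X} {C M : ℝ} (hC : 0 ≤ C) (hM : 0 < M)
    (h : M * infDist x {y | f y = 0} ≤ C * ‖f x‖) :
    ‖1 / f x‖ ≤ C / (M * infDist x {y | f y = 0}) := by
  rcases eq_or_ne (f x) 0 with hx | hx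
  · rw [hx, div_zero, norm_zero]
    exact div_nonneg hC (mul_nonneg hM.le infDist_nonneg)
  · have hdist : 0 < infDist x {y | f y = 0} :=
      ((isClosed_eq hf continuous_const).notMem_iff_infDist_pos hzero).mp hx
    rw [norm_div, norm_one, div_le_div_iff₀ (norm_pos_iff.mpr hx) (by positivity), one_mul]
    exact h

section InnerProductSpace

variable {E : Type*} [NormedAddCommGroup E] [InnerProductSpace ℝ E]

theorem Submodule.exists_mem_norm_eq_norm_sub_eq (K : Submodule ℝ E) {x u : E}
    (hx : x ∈ K) (hu : u ∈ K) : ∃ y ∈ K, ‖y‖ = ‖u‖ ∧ ‖x - y‖ = |‖x‖ - ‖u‖| := by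
  rcases eq_or_ne x 0 with rfl | hx0
  · exact ⟨u, hu, rfl, by simp⟩
  · have hxpos : 0 < ‖x‖ := norm_pos_iff.mpr hx0
    refine ⟨(‖u‖ / ‖x‖) • x, K.smul_mem _ hx, ?_, ?_⟩
    · rw [norm_smul, Real.norm_of_nonneg (by positivity), div_mul_cancel₀ _ hxpos.ne']
    · have hsub : x - (‖u‖ / ‖x‖) • x = (1 - ‖u‖ / ‖x‖) • x := by rw [sub_smul, one_smul]
      rw [hsub, norm_smul, Real.norm_eq_abs, ← abs_of_pos hxpos, ← abs_mul, abs_of_pos hxpos,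
        sub_mul, div_mul_cancel₀ _ hxpos.ne', one_mul]

theorem inner_sub_inner_div_smul_self (a x : E) (ha : a ≠ 0) :
    ⟪a, x - (⟪a, x⟫ / ‖a‖ ^ 2) • a⟫ = 0 := by
  rw [inner_sub_right, real_inner_smul_right, real_inner_self_eq_norm_sq,
    div_mul_cancel₀ _ (by positivity), sub_self]

theorem norm_inner_div_smul_self (a x : E) (ha : a ≠ 0) :
    ‖(⟪a, x⟫ / ‖a‖ ^ 2) • a‖ = |⟪a, x⟫| / ‖a‖ := by
  have : 0 < ‖a‖ := norm_pos_iff.mpr ha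
  rw [norm_smul, Real.norm_eq_abs, abs_div, abs_of_pos (by positivity : 0 < ‖a‖ ^ 2)]
  field_simp

theorem norm_sub_inner_div_smul_self_sq (a x : E) (ha : a ≠ 0) :
    ‖x - (⟪a, x⟫ / ‖a‖ ^ 2) • a‖ ^ 2 = ‖x‖ ^ 2 - ⟪a, x⟫ ^ 2 / ‖a‖ ^ 2 := by
  have : 0 < ‖a‖ := norm_pos_iff.mpr ha
  rw [norm_sub_sq_real, real_inner_smul_right, norm_inner_div_smul_self a x ha, div_pow, sq_abs,
    real_inner_comm]
  field_simp
  ring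

theorem exists_inner_eq_zero_norm_eq_norm_sub_le (a u x : E) (ha : a ≠ 0) (hu : u ≠ 0)
    (hau : ⟪a, u⟫ = 0) :
    ∃ y, ⟪a, y⟫ = 0 ∧ ‖y‖ = ‖u‖ ∧
      ‖x - y‖ ≤ |⟪a, x⟫| / ‖a‖ + (|‖x‖ ^ 2 - ‖u‖ ^ 2| + ⟪a, x⟫ ^ 2 / ‖a‖ ^ 2) / ‖u‖ := by
  set x₁ := x - (⟪a, x⟫ / ‖a‖ ^ 2) • a
  have hx₁ : x₁ ∈ (ℝ ∙ a)ᗮ :=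
    Submodule.mem_orthogonal_singleton_iff_inner_right.mpr (inner_sub_inner_div_smul_self a x ha)
  obtain ⟨y, hy, hyu, hx₁y⟩ := (ℝ ∙ a)ᗮ.exists_mem_norm_eq_norm_sub_eq hx₁
    (Submodule.mem_orthogonal_singleton_iff_inner_right.mpr hau)
  refine ⟨y, Submodule.mem_orthogonal_singleton_iff_inner_right.mp hy, hyu, ?_⟩
  have hupos : 0 < ‖u‖ := norm_pos_iff.mpr hu
  have hradial : ‖x₁ - y‖ ≤ (|‖x‖ ^ 2 - ‖u‖ ^ 2| + ⟪a, x⟫ ^ 2 / ‖a‖ ^ 2) / ‖u‖ := by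
    rw [hx₁y, le_div_iff₀ hupos]
    calc |‖x₁‖ - ‖u‖| * ‖u‖ ≤ |‖x₁‖ ^ 2 - ‖u‖ ^ 2| :=
          abs_sub_mul_le_abs_sq_sub_sq (norm_nonneg _) hupos.le
      _ = |(‖x‖ ^ 2 - ‖u‖ ^ 2) - ⟪a, x⟫ ^ 2 / ‖a‖ ^ 2| := by
          rw [norm_sub_inner_div_smul_self_sq a x ha]; ring_nf
      _ ≤ |‖x‖ ^ 2 - ‖u‖ ^ 2| + ⟪a, x⟫ ^ 2 / ‖a‖ ^ 2 := by
          refine (abs_sub _ _).trans_eq ?_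
          rw [abs_of_nonneg (a := ⟪a, x⟫ ^ 2 / ‖a‖ ^ 2) (by positivity)]
  calc ‖x - y‖ ≤ ‖x - x₁‖ + ‖x₁ - y‖ := norm_sub_le_norm_sub_add_norm_sub _ _ _
    _ ≤ _ := by
      rw [sub_sub_cancel, norm_inner_div_smul_self a x ha]
      gcongr

theorem norm_add_half_smul_sq (p b : E) :
    ‖p + (2⁻¹ : ℝ) • b‖ ^ 2 = ‖p‖ ^ 2 + ⟪b, p⟫ + ‖b‖ ^ 2 / 4 := by
  rw [norm_add_sq_real, real_inner_smul_right, norm_smul, real_inner_comm]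
  norm_num
  ring

theorem exists_norm_sq_add_inner_eq_zero_norm_sub_le {a b : E} (ha : a ≠ 0) (hb : ‖b‖ = ‖a‖)
    (hab : ⟪a, b⟫ = 0) {k : E} (hk : ‖k‖ ≤ 3 * ‖a‖) :
    ∃ p, ‖p‖ ^ 2 + ⟪b, p⟫ = 0 ∧ ⟪a, p⟫ = 0 ∧
      ‖k - p‖ ≤ 8 * (|‖k‖ ^ 2 + ⟪b, k⟫| + |⟪a, k⟫|) / ‖a‖ := by
  have hA : 0 < ‖a‖ := norm_pos_iff.mpr ha
  set u : E := (2⁻¹ : ℝ) • b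
  set x := k + u
  have hu : ‖u‖ = ‖a‖ / 2 := by
    rw [norm_smul, hb]; norm_num; ring
  have hau : ⟪a, u⟫ = 0 := by rw [real_inner_smul_right, hab, mul_zero]
  have hax : ⟪a, x⟫ = ⟪a, k⟫ := by rw [inner_add_right, hau, add_zero]
  have hx : ‖x‖ ^ 2 - ‖u‖ ^ 2 = ‖k‖ ^ 2 + ⟪b, k⟫ := by
    rw [norm_add_half_smul_sq, hu, hb]; ring
  obtain ⟨y, hay, hyu, hxy⟩ := exists_inner_eq_zero_norm_eq_norm_sub_le a u x ha
    (norm_ne_zero_iff.mp (by rw [hu]; positivity)) hau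
  refine ⟨y - u, ?_, ?_, ?_⟩
  · have := norm_add_half_smul_sq (y - u) b
    rw [sub_add_cancel, hyu, hu, hb] at this
    linear_combination -this
  · rw [inner_sub_right, hay, hau, sub_zero]
  · have hxa : ‖x‖ ≤ 7 / 2 * ‖a‖ := by
      calc ‖x‖ ≤ ‖k‖ + ‖u‖ := norm_add_le k u
        _ ≤ 7 / 2 * ‖a‖ := by rw [hu]; linarith
    have hsq : ⟪a, k⟫ ^ 2 / ‖a‖ ^ 2 ≤ 7 / 2 * |⟪a, k⟫| := by
      rw [div_le_iff₀ (by positivity), ← sq_abs]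
      calc |⟪a, k⟫| ^ 2 = |⟪a, k⟫| * |⟪a, x⟫| := by rw [hax, sq]
        _ ≤ |⟪a, k⟫| * (‖a‖ * (7 / 2 * ‖a‖)) := by
          gcongr
          exact (abs_real_inner_le_norm a x).trans (by gcongr)
        _ = _ := by ring
    rw [sub_sub_eq_add_sub]
    refine hxy.trans ?_
    rw [hax, hx, hu, div_div_eq_mul_div, ← add_div]
    gcongr
    linarith [abs_nonneg (‖k‖ ^ 2 + ⟪b, k⟫)]

/-- `-|k|² + i ξ·k` for `ξ = a + i b`: the symbol of `Δ + ξ·∇`. -/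
def faddeevSymbol (a b k : E) : ℂ := ((-(‖k‖ ^ 2 + ⟪b, k⟫) : ℝ) : ℂ) + (⟪a, k⟫ : ℂ) * I

@[simp]
theorem faddeevSymbol_re (a b k : E) : (faddeevSymbol a b k).re = -(‖k‖ ^ 2 + ⟪b, k⟫) := by
  simp [faddeevSymbol, -ofReal_pow]

@[simp]
theorem faddeevSymbol_im (a b k : E) : (faddeevSymbol a b k).im = ⟪a, k⟫ := by
  simp [faddeevSymbol, -ofReal_pow]

theorem faddeevSymbol_eq_zero_iff {a b k : E} :
    faddeevSymbol a b k = 0 ↔ ‖k‖ ^ 2 + ⟪b, k⟫ = 0 ∧ ⟪a, k⟫ = 0 := by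
  rw [Complex.ext_iff, faddeevSymbol_re, faddeevSymbol_im, zero_re, zero_im, neg_eq_zero]

theorem continuous_faddeevSymbol (a b : E) : Continuous (faddeevSymbol a b) := by
  unfold faddeevSymbol
  fun_prop

theorem abs_add_abs_le_two_mul_norm_faddeevSymbol (a b k : E) :
    |‖k‖ ^ 2 + ⟪b, k⟫| + |⟪a, k⟫| ≤ 2 * ‖faddeevSymbol a b k‖ := by
  have hre := (faddeevSymbol a b k).abs_re_le_norm
  have him := (faddeevSymbol a b k).abs_im_le_norm
  rw [faddeevSymbol_re, abs_neg] at hre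
  rw [faddeevSymbol_im] at him
  linarith

theorem infDist_setOf_faddeevSymbol_eq_zero_le {a b : E} (ha : a ≠ 0) (hb : ‖b‖ = ‖a‖)
    (hab : ⟪a, b⟫ = 0) {k : E} (hk : ‖k‖ ≤ 3 * ‖a‖) :
    infDist k {p | faddeevSymbol a b p = 0} ≤ 16 * ‖faddeevSymbol a b k‖ / ‖a‖ := by
  obtain ⟨p, hp_re, hp_im, hkp⟩ := exists_norm_sq_add_inner_eq_zero_norm_sub_le ha hb hab hk
  calc infDist k _ ≤ dist k p := infDist_le_dist_of_mem (faddeevSymbol_eq_zero_iff.mpr ⟨hp_re, hp_im⟩)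
    _ = ‖k - p‖ := dist_eq_norm k p
    _ ≤ 8 * (|‖k‖ ^ 2 + ⟪b, k⟫| + |⟪a, k⟫|) / ‖a‖ := hkp
    _ ≤ 16 * ‖faddeevSymbol a b k‖ / ‖a‖ := by
      gcongr ?_ / _
      linarith [abs_add_abs_le_two_mul_norm_faddeevSymbol a b k]

end InnerProductSpace

namespace EuclideanSpace

variable {ι : Type*} [Fintype ι]

theorem sum_ofReal_add_mul_I_mul_ofReal (a b k : EuclideanSpace ℝ ι) :
    ∑ j, ((a j : ℂ) + (b j : ℂ) * I) * (k j : ℂ) = (⟪a, k⟫ : ℂ) + (⟪b, k⟫ : ℂ) * I := by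
  apply Complex.ext <;> simp [PiLp.inner_apply, mul_comm]

theorem sum_ofReal_add_mul_I_sq (a b : EuclideanSpace ℝ ι) :
    ∑ j, ((a j : ℂ) + (b j : ℂ) * I) ^ 2 = ((‖a‖ ^ 2 - ‖b‖ ^ 2 : ℝ) : ℂ) + (2 * ⟪a, b⟫ : ℝ) * I := by
  rw [real_norm_sq_eq, real_norm_sq_eq]
  apply Complex.ext <;> simp [PiLp.inner_apply, sq, Finset.mul_sum, two_mul, mul_comm]

theorem norm_eq_and_inner_eq_zero_of_sum_sq_eq_zero {a b : EuclideanSpace ℝ ι}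
    (h : ∑ j, ((a j : ℂ) + (b j : ℂ) * I) ^ 2 = 0) : ‖a‖ = ‖b‖ ∧ ⟪a, b⟫ = 0 := by
  rw [sum_ofReal_add_mul_I_sq, Complex.ext_iff] at h
  simp only [add_re, ofReal_re, mul_re, ofReal_im, I_re, I_im, add_im, mul_im, zero_re,
    zero_im] at h
  exact ⟨(sq_eq_sq₀ (norm_nonneg a) (norm_nonneg b)).mp (by linarith [h.1]), by linarith [h.2]⟩

theorem neg_sq_norm_add_I_mul_sum_eq_faddeevSymbol (a b k : EuclideanSpace ℝ ι) :
    -((‖k‖ ^ 2 : ℝ) : ℂ) + I * ∑ j, ((a j : ℂ) + (b j : ℂ) * I) * (k j : ℂ)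
      = faddeevSymbol a b k := by
  rw [sum_ofReal_add_mul_I_mul_ofReal]
  apply Complex.ext
  · simp [-ofReal_pow]
    ring
  · simp [-ofReal_pow]

end EuclideanSpace

/-- For `ξ = a + ib` with `ξ·ξ = 0`, `|ξ| > 2`, and `|k| ≤ 2|ξ|`, one has
`|K̂_ξ(k)| ≤ C/(|ξ| · dist(k, Γ_ξ))` for an absolute constant `C`, where
`Γ_ξ = {k : -|k|² + i ξ·k = 0}`. -/
theorem stmt10 (d : ℕ) :
    ∃ C > (0 : ℝ), ∀ a b : EuclideanSpace ℝ (Fin d),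
      (∑ j, ((a j : ℂ) + (b j : ℂ) * Complex.I) ^ 2 = 0) →
      2 < Real.sqrt (‖a‖ ^ 2 + ‖b‖ ^ 2) →
      ∀ k : EuclideanSpace ℝ (Fin d), ‖k‖ ≤ 2 * Real.sqrt (‖a‖ ^ 2 + ‖b‖ ^ 2) →
        ‖(1 / (-((‖k‖ ^ 2 : ℝ) : ℂ)
            + Complex.I * ∑ j, ((a j : ℂ) + (b j : ℂ) * Complex.I) * (k j : ℂ)))‖
          ≤ C / (Real.sqrt (‖a‖ ^ 2 + ‖b‖ ^ 2) *
              Metric.infDist k {k' : EuclideanSpace ℝ (Fin d) |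
                -((‖k'‖ ^ 2 : ℝ) : ℂ)
                  + Complex.I * ∑ j, ((a j : ℂ) + (b j : ℂ) * Complex.I) * (k' j : ℂ) = 0}) := by
  refine ⟨24, by norm_num, fun a b hξ hr k hk => ?_⟩
  obtain ⟨hab_norm, hab⟩ := EuclideanSpace.norm_eq_and_inner_eq_zero_of_sum_sq_eq_zero hξ
  simp only [EuclideanSpace.neg_sq_norm_add_I_mul_sum_eq_faddeevSymbol]
  set r := Real.sqrt (‖a‖ ^ 2 + ‖b‖ ^ 2)
  have hr2 : r ^ 2 = 2 * ‖a‖ ^ 2 := by rw [Real.sq_sqrt (by positivity), hab_norm]; ring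
  have hA : 0 < ‖a‖ := by nlinarith [norm_nonneg a]
  have hrA : r ≤ 3 / 2 * ‖a‖ := by nlinarith
  refine norm_one_div_le_div_infDist (continuous_faddeevSymbol a b)
    ⟨0, faddeevSymbol_eq_zero_iff.mpr (by simp)⟩ (by norm_num) (by linarith) ?_
  calc r * infDist k _ ≤ 3 / 2 * ‖a‖ * (16 * ‖faddeevSymbol a b k‖ / ‖a‖) :=
        mul_le_mul hrA (infDist_setOf_faddeevSymbol_eq_zero_le (norm_pos_iff.mp hA) hab_norm.symm
          hab (by linarith)) infDist_nonneg (by positivity)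
    _ = 24 * ‖faddeevSymbol a b k‖ := by field_simp; ring
end

section
/- Let d ≥ 3 and R > 10. For fixed t with 0 < t ≤ 2s and 1 < p < 2 with 0 < δ < 2 − p, the double integral ∫₀^{π/2} ∫₀^{π} θ₁^{d-2} θ₂^{d-3} / (|t/s − cos θ₁|^p + |sin θ₁ cos θ₂|^p) dθ₂ dθ₁ is bounded by C_p (1 + (1 − t/s)^{-(1-δ)/2}) when t ≤ s, for a constant C_p depending only on d, p, δ. -/
open MeasureTheory Real

/-!
Write `r = t / s` and `a = |r - cos θ₁|`. Jordan's inequality gives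
`|sin θ₁ cos θ₂| ≥ (4 / π²) θ₁ |θ₂ - π / 2|`, so after a translation and a rescaling the inner
integral is at most a multiple of `θ₁ ^ (d - 3) * a ^ (1 - p) * ∫ (1 + |x| ^ p)⁻¹`, finite as
`p > 1`. For `r < 1` let `θ₀ = arccos r`; then `a ≥ (2 / π²) θ₀ |θ₁ - θ₀|`, so the outer integrand
is at most a multiple of `θ₀ ^ (1 - p) * |θ₁ - θ₀| ^ (1 - p)`, integrable as `p < 2`, and
`θ₀² ≥ 1 - r` turns `θ₀ ^ (1 - p)` into `(1 - r) ^ ((1 - p) / 2) ≤ (1 - r) ^ (-(1 - δ) / 2)`.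
-/

lemma rpow_add_le_two_rpow_mul_one_add_rpow {p x : ℝ} (hp : 0 ≤ p) (hx : 0 ≤ x) :
    (1 + x) ^ p ≤ 2 ^ p * (1 + x ^ p) := by
  rcases le_total x 1 with hx1 | hx1
  · calc (1 + x) ^ p ≤ 2 ^ p := rpow_le_rpow (by positivity) (by linarith) hp
      _ ≤ 2 ^ p * (1 + x ^ p) := le_mul_of_one_le_right (by positivity)
          (le_add_of_nonneg_right (by positivity))
  · calc (1 + x) ^ p ≤ (2 * x) ^ p := rpow_le_rpow (by positivity) (by linarith) hp
      _ = 2 ^ p * x ^ p := mul_rpow (by norm_num) hx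
      _ ≤ 2 ^ p * (1 + x ^ p) := by gcongr; linarith

lemma integrable_inv_one_add_abs_rpow {p : ℝ} (hp : 1 < p) :
    Integrable fun x : ℝ => (1 + |x| ^ p)⁻¹ := by
  refine ((integrable_one_add_norm (E := ℝ) (μ := volume) (r := p) (by simpa)).const_mul
    (2 ^ p)).mono' (Measurable.aestronglyMeasurable (by fun_prop))
    (Filter.Eventually.of_forall fun x => ?_)
  have h1 : 0 < 1 + |x| := by positivity
  rw [norm_inv, Real.norm_of_nonneg (by positivity), Real.norm_eq_abs, rpow_neg h1.le,
    ← div_eq_mul_inv, le_div_iff₀ (by positivity), ← div_eq_inv_mul,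
    div_le_iff₀ (by positivity)]
  simpa [mul_comm] using rpow_add_le_two_rpow_mul_one_add_rpow (by linarith) (abs_nonneg x)

lemma inv_rpow_add_abs_mul_rpow_eq {p a : ℝ} (ha : 0 < a) (c x : ℝ) :
    (a ^ p + |c * x| ^ p)⁻¹ = (a ^ p)⁻¹ * (1 + |c / a * x| ^ p)⁻¹ := by
  have hap : 0 < a ^ p := rpow_pos_of_pos ha p
  rw [← mul_inv, mul_add, mul_one, mul_comm (c / a), mul_div_assoc', abs_div, abs_of_pos ha,
    div_rpow (abs_nonneg _) ha.le, mul_div_cancel₀ _ hap.ne', mul_comm x]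

lemma integrable_inv_rpow_add_abs_mul_rpow {p a c : ℝ} (hp : 1 < p) (ha : 0 < a) (hc : c ≠ 0) :
    Integrable fun x : ℝ => (a ^ p + |c * x| ^ p)⁻¹ := by
  simp_rw [inv_rpow_add_abs_mul_rpow_eq ha]
  exact ((integrable_inv_one_add_abs_rpow hp).comp_mul_left' (div_ne_zero hc ha.ne')).const_mul _

lemma integral_inv_rpow_add_abs_mul_rpow {p a c : ℝ} (ha : 0 < a) (hc : 0 < c) :
    ∫ x : ℝ, (a ^ p + |c * x| ^ p)⁻¹ = a ^ (1 - p) / c * ∫ x : ℝ, (1 + |x| ^ p)⁻¹ := by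
  simp_rw [inv_rpow_add_abs_mul_rpow_eq ha]
  rw [integral_const_mul, Measure.integral_comp_mul_left (fun x => (1 + |x| ^ p)⁻¹),
    smul_eq_mul, ← mul_assoc, inv_div, abs_of_pos (div_pos ha hc), rpow_sub ha, rpow_one]
  field_simp

lemma setIntegral_comp_sub_le_integral {f : ℝ → ℝ} (hf : Integrable f) (hf0 : ∀ x, 0 ≤ f x)
    (s : Set ℝ) (x₀ : ℝ) : ∫ x in s, f (x - x₀) ≤ ∫ x, f x := by
  rw [← integral_sub_right_eq_self f x₀]
  exact setIntegral_le_integral (hf.comp_sub_right x₀) (Filter.Eventually.of_forall fun x => hf0 _)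

lemma integrable_indicator_ball_abs_rpow {s : ℝ} (hs : -1 < s) (R : ℝ) :
    Integrable ((Metric.ball 0 R).indicator fun x : ℝ => |x| ^ s) := by
  refine (integrable_indicator_iff Metric.isOpen_ball.measurableSet).2 <|
    integrableOn_ball_of_norm_le_rpow (C := 1) (α := -s) (by simp) (by simp; linarith) ?_
      (Measurable.aestronglyMeasurable (by fun_prop))
  filter_upwards with x
  rw [neg_neg, one_mul, Real.norm_eq_abs, Real.norm_eq_abs, abs_of_nonneg (by positivity)]

lemma mul_abs_add_mul_abs_sub_le_abs_cos_sub_cos {x y : ℝ} (hadd : |x + y| ≤ π)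
    (hsub : |x - y| ≤ π) : 2 / π ^ 2 * (|x + y| * |x - y|) ≤ |cos x - cos y| := by
  have h₁ := mul_abs_le_abs_sin (x := (x + y) / 2) (by rw [abs_div, abs_two]; linarith)
  have h₂ := mul_abs_le_abs_sin (x := (x - y) / 2) (by rw [abs_div, abs_two]; linarith)
  rw [cos_sub_cos, abs_mul, abs_mul, abs_neg, abs_two]
  rw [abs_div, abs_two] at h₁ h₂
  calc 2 / π ^ 2 * (|x + y| * |x - y|)
      = 2 * ((2 / π * (|x + y| / 2)) * (2 / π * (|x - y| / 2))) := by field_simp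
    _ ≤ 2 * (|sin ((x + y) / 2)| * |sin ((x - y) / 2)|) := by gcongr
    _ = _ := by ring

lemma mul_abs_sub_pi_div_two_le_abs_cos {x : ℝ} (h0 : 0 ≤ x) (hπ : x ≤ π) :
    2 / π * |x - π / 2| ≤ |cos x| := by
  rw [← abs_neg (cos x), ← sin_sub_pi_div_two]
  exact mul_abs_le_abs_sin (abs_le.2 ⟨by linarith, by linarith⟩)

lemma mul_abs_sub_pi_div_two_le_abs_sin_mul_cos {θ₁ θ₂ : ℝ} (h₁ : θ₁ ∈ Set.Icc 0 (π / 2))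
    (h₂ : θ₂ ∈ Set.Icc 0 π) : 4 / π ^ 2 * θ₁ * |θ₂ - π / 2| ≤ |sin θ₁ * cos θ₂| := by
  rw [abs_mul, abs_of_nonneg (sin_nonneg_of_nonneg_of_le_pi h₁.1 (by linarith [h₁.2, pi_pos]))]
  calc 4 / π ^ 2 * θ₁ * |θ₂ - π / 2| = (2 / π * θ₁) * (2 / π * |θ₂ - π / 2|) := by ring
    _ ≤ sin θ₁ * |cos θ₂| := by
      gcongr
      · exact (mul_nonneg (by positivity) h₁.1).trans (mul_le_sin h₁.1 h₁.2)
      · exact mul_le_sin h₁.1 h₁.2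
      · exact mul_abs_sub_pi_div_two_le_abs_cos h₂.1 h₂.2

lemma arccos_rpow_le {r s : ℝ} (hr₀ : -1 ≤ r) (hr₁ : r < 1) (hs : s ≤ 0) :
    arccos r ^ s ≤ (1 - r) ^ (s / 2) := by
  have hθ₀ : 0 < arccos r := arccos_pos.2 hr₁
  have hsq : 1 - r ≤ arccos r ^ 2 := by
    have := one_sub_sq_div_two_le_cos (x := arccos r)
    rw [cos_arccos hr₀ hr₁.le] at this
    nlinarith
  calc arccos r ^ s = (arccos r ^ 2) ^ (s / 2) := by
        rw [← rpow_natCast, ← rpow_mul hθ₀.le]; congr 1; ring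
    _ ≤ (1 - r) ^ (s / 2) := rpow_le_rpow_of_nonpos (by linarith) hsq (by linarith)

noncomputable def innerAngularIntegral (d : ℕ) (p r θ₁ : ℝ) : ℝ :=
  ∫ θ₂ in Set.Ioc 0 π, θ₁ ^ (d - 2) * θ₂ ^ (d - 3) / (|r - cos θ₁| ^ p + |sin θ₁ * cos θ₂| ^ p)

lemma innerAngularIntegral_nonneg (d : ℕ) (p r : ℝ) {θ : ℝ} (hθ : 0 ≤ θ) :
    0 ≤ innerAngularIntegral d p r θ :=
  setIntegral_nonneg measurableSet_Ioc fun θ₂ hθ₂ => by have := hθ₂.1; positivity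

lemma innerAngularIntegral_le {d : ℕ} (hd : 3 ≤ d) {p r θ : ℝ} (hp : 1 < p)
    (hθ : θ ∈ Set.Ioc 0 (π / 2)) (hr : r ≠ cos θ) :
    innerAngularIntegral d p r θ ≤
      π ^ (d - 1) / 4 * (∫ x : ℝ, (1 + |x| ^ p)⁻¹) * θ ^ (d - 3) * |r - cos θ| ^ (1 - p) := by
  obtain ⟨hθ0, hθπ⟩ := hθ
  set a := |r - cos θ|
  have ha : 0 < a := abs_pos.2 (sub_ne_zero.2 hr)
  set c := 4 / π ^ 2 * θ
  have hc : 0 < c := by positivity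
  set φ : ℝ → ℝ := fun x => (a ^ p + |c * x| ^ p)⁻¹
  have hφ0 : ∀ x, 0 ≤ φ x := fun x => by positivity
  have hφ : Integrable φ := integrable_inv_rpow_add_abs_mul_rpow hp ha hc.ne'
  have hpt : ∀ θ₂ ∈ Set.Ioc 0 π, θ ^ (d - 2) * θ₂ ^ (d - 3) / (a ^ p + |sin θ * cos θ₂| ^ p)
      ≤ θ ^ (d - 2) * π ^ (d - 3) * φ (θ₂ - π / 2) := fun θ₂ hθ₂ => by
    have hsin : |c * (θ₂ - π / 2)| ≤ |sin θ * cos θ₂| := by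
      rw [abs_mul, abs_of_pos hc]
      exact mul_abs_sub_pi_div_two_le_abs_sin_mul_cos ⟨hθ0.le, hθπ⟩ ⟨hθ₂.1.le, hθ₂.2⟩
    rw [div_eq_mul_inv]
    exact mul_le_mul (by gcongr; exacts [hθ₂.1.le, hθ₂.2]) (inv_anti₀ (by positivity) (by gcongr))
      (by positivity) (by have := hθ₂.1; positivity)
  calc innerAngularIntegral d p r θ
      ≤ ∫ θ₂ in Set.Ioc 0 π, θ ^ (d - 2) * π ^ (d - 3) * φ (θ₂ - π / 2) := by
        refine integral_mono_of_nonneg ?_ ((hφ.comp_sub_right _).const_mul _).integrableOn ?_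
        · filter_upwards [ae_restrict_mem measurableSet_Ioc] with θ₂ hθ₂
          have := hθ₂.1
          positivity
        · filter_upwards [ae_restrict_mem measurableSet_Ioc] with θ₂ hθ₂ using hpt θ₂ hθ₂
    _ = θ ^ (d - 2) * π ^ (d - 3) * ∫ θ₂ in Set.Ioc 0 π, φ (θ₂ - π / 2) := integral_const_mul _ _
    _ ≤ θ ^ (d - 2) * π ^ (d - 3) * ∫ x, φ x := by
        gcongr
        exact setIntegral_comp_sub_le_integral hφ hφ0 _ _
    _ = θ ^ (d - 2) * π ^ (d - 3) * (a ^ (1 - p) / c * ∫ x : ℝ, (1 + |x| ^ p)⁻¹) := by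
        rw [integral_inv_rpow_add_abs_mul_rpow ha hc]
    _ = _ := by
        rw [show d - 2 = d - 3 + 1 by omega, show d - 1 = d - 3 + 2 by omega]
        simp only [c]
        field_simp
        ring

lemma innerAngularIntegral_cos_le {d : ℕ} (hd : 3 ≤ d) {p θ θ₀ : ℝ} (hp : 1 < p)
    (hθ : θ ∈ Set.Ioc 0 (π / 2)) (hθ₀ : θ₀ ∈ Set.Ioc 0 (π / 2)) (hne : θ ≠ θ₀) :
    innerAngularIntegral d p (cos θ₀) θ ≤ π ^ (d - 1) / 4 * (∫ x : ℝ, (1 + |x| ^ p)⁻¹) *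
      (π / 2) ^ (d - 3) * (2 / π ^ 2 * θ₀ * |θ - θ₀|) ^ (1 - p) := by
  have hpos : 0 < 2 / π ^ 2 * θ₀ * |θ - θ₀| := by
    have := hθ₀.1; have := abs_pos.2 (sub_ne_zero.2 hne); positivity
  have hcos : 2 / π ^ 2 * θ₀ * |θ - θ₀| ≤ |cos θ₀ - cos θ| := by
    have hπ := pi_pos
    refine le_trans ?_ (mul_abs_add_mul_abs_sub_le_abs_cos_sub_cos (x := θ₀) (y := θ)
      (abs_le.2 ⟨by linarith [hθ.1, hθ₀.1], by linarith [hθ.2, hθ₀.2]⟩)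
      (abs_le.2 ⟨by linarith [hθ.2, hθ₀.1], by linarith [hθ.1, hθ₀.2]⟩))
    rw [abs_sub_comm θ₀, abs_of_pos (by linarith [hθ.1, hθ₀.1] : 0 < θ₀ + θ), ← mul_assoc]
    gcongr
    linarith [hθ.1]
  have hne' : cos θ₀ ≠ cos θ := fun h => by simp [h] at hcos hpos; linarith
  refine (innerAngularIntegral_le hd hp hθ hne').trans ?_
  have hB : 0 ≤ π ^ (d - 1) / 4 * ∫ x : ℝ, (1 + |x| ^ p)⁻¹ :=
    mul_nonneg (by positivity) (integral_nonneg fun x => by positivity)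
  exact mul_le_mul (mul_le_mul_of_nonneg_left (pow_le_pow_left₀ hθ.1.le hθ.2 _) hB)
    (rpow_le_rpow_of_nonpos hpos hcos (by linarith)) (by positivity) (by positivity)

lemma exists_integral_innerAngularIntegral_le {d : ℕ} (hd : 3 ≤ d) {p : ℝ} (hp1 : 1 < p)
    (hp2 : p < 2) : ∃ A ≥ 0, ∀ r ∈ Set.Ico (0 : ℝ) 1,
      ∫ θ in Set.Ioc 0 (π / 2), innerAngularIntegral d p r θ ≤ A * (1 - r) ^ ((1 - p) / 2) := by
  -- Truncating `|x| ^ (1 - p)` to the ball makes it integrable on `ℝ`, so that all its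
  -- translates by `θ₀` have integral at most the same constant.
  set h := (Metric.ball 0 π).indicator fun x : ℝ => |x| ^ (1 - p)
  have hh : Integrable h := integrable_indicator_ball_abs_rpow (by linarith) π
  have hh0 : ∀ x, 0 ≤ h x := Set.indicator_nonneg fun _ _ => by positivity
  set K := π ^ (d - 1) / 4 * (∫ x : ℝ, (1 + |x| ^ p)⁻¹) * (π / 2) ^ (d - 3) * (2 / π ^ 2) ^ (1 - p)
  have hK : 0 ≤ K := by
    have : 0 ≤ ∫ x : ℝ, (1 + |x| ^ p)⁻¹ := integral_nonneg fun x => by positivity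
    positivity
  refine ⟨K * ∫ x, h x, mul_nonneg hK (integral_nonneg hh0), fun r hr => ?_⟩
  set θ₀ := arccos r
  have hθ₀ : θ₀ ∈ Set.Ioc 0 (π / 2) := ⟨arccos_pos.2 hr.2, arccos_le_pi_div_two.2 hr.1⟩
  have hpt : ∀ θ ∈ Set.Ioc 0 (π / 2), θ ≠ θ₀ →
      innerAngularIntegral d p r θ ≤ K * θ₀ ^ (1 - p) * h (θ - θ₀) := fun θ hθ hne => by
    have hmem : θ - θ₀ ∈ Metric.ball 0 π := by
      rw [mem_ball_zero_iff, Real.norm_eq_abs, abs_lt]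
      constructor <;> linarith [hθ.1, hθ.2, hθ₀.1, hθ₀.2]
    have hbound := innerAngularIntegral_cos_le hd hp1 hθ hθ₀ hne
    rw [cos_arccos (by linarith [hr.1]) hr.2.le, mul_rpow (by have := hθ₀.1; positivity)
      (abs_nonneg _), mul_rpow (by positivity) hθ₀.1.le] at hbound
    rw [show h (θ - θ₀) = |θ - θ₀| ^ (1 - p) from Set.indicator_of_mem hmem _]
    convert hbound using 1
    simp only [K]
    ring
  calc ∫ θ in Set.Ioc 0 (π / 2), innerAngularIntegral d p r θ
      ≤ ∫ θ in Set.Ioc 0 (π / 2), K * θ₀ ^ (1 - p) * h (θ - θ₀) := by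
        refine integral_mono_of_nonneg ?_ ((hh.comp_sub_right _).const_mul _).integrableOn ?_
        · filter_upwards [ae_restrict_mem measurableSet_Ioc] with θ hθ
          exact innerAngularIntegral_nonneg d p r hθ.1.le
        · filter_upwards [ae_restrict_mem measurableSet_Ioc,
            ae_restrict_of_ae (Measure.ae_ne volume θ₀)] with θ hθ hne using hpt θ hθ hne
    _ = K * θ₀ ^ (1 - p) * ∫ θ in Set.Ioc 0 (π / 2), h (θ - θ₀) := integral_const_mul _ _
    _ ≤ K * θ₀ ^ (1 - p) * ∫ x, h x := mul_le_mul_of_nonneg_left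
        (setIntegral_comp_sub_le_integral hh hh0 _ _) (mul_nonneg hK (rpow_nonneg hθ₀.1.le _))
    _ ≤ K * (1 - r) ^ ((1 - p) / 2) * ∫ x, h x := mul_le_mul_of_nonneg_right
        (mul_le_mul_of_nonneg_left (arccos_rpow_le (by linarith [hr.1]) hr.2 (by linarith)) hK)
        (integral_nonneg hh0)
    _ = (K * ∫ x, h x) * (1 - r) ^ ((1 - p) / 2) := by ring

theorem stmt13_general (d : ℕ) (hd : 3 ≤ d) (p δ : ℝ) (hp1 : 1 < p) (hp2 : p < 2)
    (hδ : δ < 2 - p) :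
    ∃ C > (0 : ℝ), ∀ R : ℝ, 10 < R → ∀ s t : ℝ, 0 < t → t ≤ 2 * s → t ≤ s →
      (∫ θ₁ in Set.Ioc 0 (π / 2), ∫ θ₂ in Set.Ioc 0 π,
          θ₁ ^ (d - 2) * θ₂ ^ (d - 3)
            / (|t / s - Real.cos θ₁| ^ p + |Real.sin θ₁ * Real.cos θ₂| ^ p))
        ≤ C * (1 + (1 - t / s) ^ (-((1 - δ) / 2))) := by
  obtain ⟨A, hA, hbound⟩ := exists_integral_innerAngularIntegral_le hd hp1 hp2
  set I₁ := ∫ θ in Set.Ioc 0 (π / 2), innerAngularIntegral d p 1 θ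
  refine ⟨A + |I₁| + 1, by positivity, fun R _ s t ht _ hts => ?_⟩
  have hs : 0 < s := ht.trans_le hts
  have hr₀ : 0 < t / s := div_pos ht hs
  have hr₁ : t / s ≤ 1 := (div_le_one hs).2 hts
  have hX : 0 ≤ (1 - t / s) ^ (-((1 - δ) / 2)) := rpow_nonneg (by linarith) _
  change ∫ θ in Set.Ioc 0 (π / 2), innerAngularIntegral d p (t / s) θ ≤ _
  rcases hr₁.lt_or_eq with hlt | heq
  · calc _ ≤ A * (1 - t / s) ^ ((1 - p) / 2) := hbound _ ⟨hr₀.le, hlt⟩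
      _ ≤ A * (1 - t / s) ^ (-((1 - δ) / 2)) := mul_le_mul_of_nonneg_left
        (rpow_le_rpow_of_exponent_ge (by linarith) (by linarith) (by linarith)) hA
      _ ≤ _ := by nlinarith [abs_nonneg I₁]
  · -- At `t = s` the paper's bound is infinite but Lean reads `0 ^ (-(1 - δ) / 2)` as `0`; the
    -- left side is then a single number depending only on `d` and `p`, which `C` absorbs.
    rw [heq]
    have h0 : 0 ≤ (1 - 1 : ℝ) ^ (-((1 - δ) / 2)) := rpow_nonneg (by norm_num) _
    calc I₁ ≤ A + |I₁| + 1 := by linarith [le_abs_self I₁]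
      _ ≤ _ := le_mul_of_one_le_right (by positivity) (by linarith)

/-- Angular averaging estimate: for `d ≥ 3`, `1 < p < 2`, `0 < δ < 2 - p`, there is a
constant `C` (depending only on `d, p, δ`) such that for `R > 10` and `0 < t ≤ 2s`
with `t ≤ s`, the double angular integral is bounded by
`C (1 + (1 - t/s)^(-(1-δ)/2))`. -/
theorem stmt13 (d : ℕ) (hd : 3 ≤ d) (p δ : ℝ) (hp1 : 1 < p) (hp2 : p < 2)
    (hδ0 : 0 < δ) (hδ : δ < 2 - p) :
    ∃ C > (0 : ℝ), ∀ R : ℝ, 10 < R → ∀ s t : ℝ, 0 < t → t ≤ 2 * s → t ≤ s →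
      (∫ θ₁ in Set.Ioc 0 (π / 2), ∫ θ₂ in Set.Ioc 0 π,
          θ₁ ^ (d - 2) * θ₂ ^ (d - 3)
            / (|t / s - Real.cos θ₁| ^ p + |Real.sin θ₁ * Real.cos θ₂| ^ p))
        ≤ C * (1 + (1 - t / s) ^ (-((1 - δ) / 2))) :=
  stmt13_general d hd p δ hp1 hp2 hδ
end

section
/- Let ψ : ℝ^d → [0,∞) be a Schwartz function (or satisfy ψ(x) ≤ C_N (1+|x|)^{-N} for all N). Then there is a constant C such that for every ξ ∈ ℂ^d with ξ·ξ = 0, |ξ| > 2 and every k ∈ ℝ^d, ∫_{dist(η, Γ_ξ) ≤ 1} ψ(η − k) dη ≤ C, with C independent of ξ and k. -/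
/-! The tubular neighbourhood plays no role beyond being a set: a non-negative `ψ` with decay
`(1 + ‖x‖)^{-(d+1)}` is dominated by an integrable function, so the integral of any translate of
`ψ` over any set is at most the integral of that dominating function over all of `ℝ^d`. -/

open MeasureTheory Module

theorem setIntegral_le_integral_of_nonneg_of_le {α : Type*} [MeasurableSpace α] {μ : Measure α}
    {f g : α → ℝ} (s : Set α) (hf : 0 ≤ f) (hfg : f ≤ g) (hg : Integrable g μ) :
    ∫ x in s, f x ∂μ ≤ ∫ x, g x ∂μ :=
  calc ∫ x in s, f x ∂μ ≤ ∫ x in s, g x ∂μ :=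
        integral_mono_of_nonneg (.of_forall hf) hg.integrableOn (.of_forall hfg)
    _ ≤ ∫ x, g x ∂μ := setIntegral_le_integral hg (.of_forall fun x => (hf x).trans (hfg x))

theorem integrable_div_one_add_norm_pow {E : Type*} [NormedAddCommGroup E] [NormedSpace ℝ E]
    [FiniteDimensional ℝ E] [MeasurableSpace E] [BorelSpace E] (μ : Measure E)
    [μ.IsAddHaarMeasure] (C : ℝ) {N : ℕ} (hN : finrank ℝ E < N) :
    Integrable (fun x : E => C / (1 + ‖x‖) ^ N) μ := by
  have h := (integrable_one_add_norm (μ := μ) (r := N) (by exact_mod_cast hN)).const_mul C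
  refine h.congr (.of_forall fun x => ?_)
  simp only [Real.rpow_neg (by positivity : (0 : ℝ) ≤ 1 + ‖x‖), Real.rpow_natCast, div_eq_mul_inv]

/-- For a non-negative rapidly decaying `ψ` on `ℝ^d`, the integral of `ψ(· - k)` over the
unit tubular neighborhood of the characteristic variety `Γ_ξ` is bounded uniformly in
`ξ = a + ib` (with `ξ·ξ = 0`, `|ξ| > 2`) and `k`. -/
theorem stmt15 (d : ℕ) (ψ : EuclideanSpace ℝ (Fin d) → ℝ)
    (hψ0 : ∀ x, 0 ≤ ψ x)
    (hdecay : ∀ N : ℕ, ∃ C > (0 : ℝ), ∀ x, ψ x ≤ C / (1 + ‖x‖) ^ N) :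
    ∃ C > (0 : ℝ), ∀ a b : EuclideanSpace ℝ (Fin d),
      (∑ j, ((a j : ℂ) + (b j : ℂ) * Complex.I) ^ 2 = 0) →
      2 < Real.sqrt (‖a‖ ^ 2 + ‖b‖ ^ 2) →
      ∀ k : EuclideanSpace ℝ (Fin d),
        (∫ η in {η : EuclideanSpace ℝ (Fin d) |
            Metric.infDist η {η' : EuclideanSpace ℝ (Fin d) |
              -((‖η'‖ ^ 2 : ℝ) : ℂ)
                + Complex.I * ∑ j, ((a j : ℂ) + (b j : ℂ) * Complex.I) * (η' j : ℂ) = 0}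
              ≤ 1}, ψ (η - k)) ≤ C := by
  obtain ⟨C, -, hψC⟩ := hdecay (d + 1)
  set g : EuclideanSpace ℝ (Fin d) → ℝ := fun x => C / (1 + ‖x‖) ^ (d + 1)
  have hg : Integrable g :=
    integrable_div_one_add_norm_pow volume C (by simp [finrank_euclideanSpace])
  have hg0 : 0 ≤ ∫ x, g x := integral_nonneg fun x => (hψ0 x).trans (hψC x)
  refine ⟨(∫ x, g x) + 1, by positivity, fun a b _ _ k => ?_⟩
  calc _ ≤ ∫ η, g (η - k) :=
        setIntegral_le_integral_of_nonneg_of_le _ (fun η => hψ0 _) (fun η => hψC _)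
          (hg.comp_sub_right k)
    _ = ∫ x, g x := integral_sub_right_eq_self g k
    _ ≤ (∫ x, g x) + 1 := by linarith
end
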